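/- arXiv:1905.00629 — 6 statements merged into one kernel-verified Lean document; each statement's English description precedes it below -/
import Mathlib

section
/- (Anna Karenina principle, IER model, fixed population) In the independent-error model with k answers per question and θ = 1/(k−1), given fault levels f_1,…,f_n, the expected proxy distance of worker i, π_i = (1/(n−1)) Σ_{i'≠i} d_H(s_i, s_{i'}) where d_H is the normalized Hamming distance over m questions, satisfies E[π_i | f_1,…,f_n] = f_i + (1 − (1+θ) f_i) · (1/(n−1)) Σ_{i'≠i} f_{i'}. -/
open MeasureTheory ProbabilityTheory Finset

lemma pair_prob {Ω : Type*} [MeasurableSpace Ω] (μ : Measure Ω) [IsProbabilityMeasure μ]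
    {A : Type*} [Fintype A] [DecidableEq A] [MeasurableSpace A] [MeasurableSingletonClass A]
    (k : ℕ) (hk : 2 ≤ k) (hcard : Fintype.card A = k)
    (a b : Ω → A) (ha : Measurable a) (hb : Measurable b)
    (zj : A) (p q : ℝ)
    (hpa : (μ {ω | a ω = zj}).toReal = 1 - p)
    (hqa : (μ {ω | b ω = zj}).toReal = 1 - q)
    (hpw : ∀ x, x ≠ zj → (μ {ω | a ω = x}).toReal = p / ((k:ℝ)-1))
    (hqw : ∀ x, x ≠ zj → (μ {ω | b ω = x}).toReal = q / ((k:ℝ)-1))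
    (hind : IndepFun a b μ) :
    (μ {ω | a ω ≠ b ω}).toReal = p + (1 - (1 + 1/((k:ℝ)-1)) * p) * q := by
  have hk1 : ((k:ℝ) - 1) ≠ 0 := by
    have : (2:ℝ) ≤ (k:ℝ) := by exact_mod_cast hk
    linarith
  have hmeq : ∀ x : A, MeasurableSet (a ⁻¹' {x} ∩ b ⁻¹' {x}) := fun x =>
    (ha (measurableSet_singleton x)).inter (hb (measurableSet_singleton x))
  have hS : MeasurableSet {ω | a ω = b ω} := by
    have hunion : {ω | a ω = b ω} = ⋃ x : A, a ⁻¹' {x} ∩ b ⁻¹' {x} := by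
      ext ω
      simp only [Set.mem_setOf_eq, Set.mem_iUnion, Set.mem_inter_iff, Set.mem_preimage,
        Set.mem_singleton_iff]
      exact ⟨fun h => ⟨b ω, h, rfl⟩, fun ⟨x, h1, h2⟩ => h1.trans h2.symm⟩
    rw [hunion]; exact MeasurableSet.iUnion hmeq
  have hunion : {ω | a ω = b ω} = ⋃ x : A, a ⁻¹' {x} ∩ b ⁻¹' {x} := by
    ext ω
    simp only [Set.mem_setOf_eq, Set.mem_iUnion, Set.mem_inter_iff, Set.mem_preimage,
      Set.mem_singleton_iff]
    exact ⟨fun h => ⟨b ω, h, rfl⟩, fun ⟨x, h1, h2⟩ => h1.trans h2.symm⟩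
  have hdisj : Pairwise (Function.onFun Disjoint fun x : A => a ⁻¹' {x} ∩ b ⁻¹' {x}) := by
    intro x y hxy
    refine Set.disjoint_left.2 fun ω hω hω' => hxy ?_
    have h1 : a ω = x := hω.1
    have h2 : a ω = y := hω'.1
    exact h1.symm.trans h2
  have hmeasS : (μ {ω | a ω = b ω}) =
      ∑ x : A, μ (a ⁻¹' {x}) * μ (b ⁻¹' {x}) := by
    rw [hunion, measure_iUnion hdisj hmeq]
    rw [tsum_fintype]
    refine Finset.sum_congr rfl fun x _ => ?_
    exact hind.measure_inter_preimage_eq_mul _ _ (measurableSet_singleton x)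
      (measurableSet_singleton x)
  have hSr : (μ {ω | a ω = b ω}).toReal =
      ∑ x : A, (μ (a ⁻¹' {x})).toReal * (μ (b ⁻¹' {x})).toReal := by
    rw [hmeasS, ENNReal.toReal_sum (fun x _ => ENNReal.mul_ne_top (measure_ne_top μ _)
      (measure_ne_top μ _))]
    exact Finset.sum_congr rfl fun x _ => ENNReal.toReal_mul
  have hpre : ∀ (g : Ω → A) (x : A), g ⁻¹' {x} = {ω | g ω = x} := fun g x => rfl
  have hval : (μ {ω | a ω = b ω}).toReal =
      (1 - p) * (1 - q) + ((k:ℝ) - 1) * (p / ((k:ℝ)-1) * (q / ((k:ℝ)-1))) := by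
    rw [hSr, ← Finset.add_sum_erase _ _ (Finset.mem_univ zj)]
    rw [hpre, hpre, hpa, hqa]
    congr 1
    rw [Finset.sum_congr rfl (fun x hx => by
      rw [hpre, hpre, hpw x (Finset.ne_of_mem_erase hx), hqw x (Finset.ne_of_mem_erase hx)])]
    rw [Finset.sum_const, Finset.card_erase_of_mem (Finset.mem_univ zj), Finset.card_univ, hcard]
    have : ((k - 1 : ℕ) : ℝ) = (k:ℝ) - 1 := by
      have : 1 ≤ k := le_trans (by norm_num) hk
      push_cast [this]; ring
    rw [nsmul_eq_mul, this]
  have hcompl : {ω | a ω ≠ b ω} = {ω | a ω = b ω}ᶜ := rfl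
  have hadd : (μ {ω | a ω = b ω}).toReal + (μ {ω | a ω = b ω}ᶜ).toReal = 1 := by
    rw [← ENNReal.toReal_add (measure_ne_top μ _) (measure_ne_top μ _),
      measure_add_measure_compl hS, measure_univ, ENNReal.toReal_one]
  rw [hcompl]
  have : (μ {ω | a ω = b ω}ᶜ).toReal = 1 - (μ {ω | a ω = b ω}).toReal := by linarith
  rw [this, hval]
  field_simp
  ring

/-- Anna Karenina principle for the IER model with a fixed population: given fault levels
`f 1, …, f n`, the expected proxy distance of worker `i` (average normalized Hamming
distance to the other workers) equals
`f i + (1 - (1+θ) f i) · (1/(n-1)) Σ_{i'≠i} f i'`, where `θ = 1/(k-1)`. -/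
theorem stmt3 {Ω : Type*} [MeasurableSpace Ω] (μ : Measure Ω) [IsProbabilityMeasure μ]
    {A : Type*} [Fintype A] [DecidableEq A] [MeasurableSpace A] [MeasurableSingletonClass A]
    (k : ℕ) (hk : 2 ≤ k) (hcard : Fintype.card A = k)
    (n m : ℕ) (hn : 2 ≤ n) (hm : 1 ≤ m)
    (z : Fin m → A) (s : Fin n → Fin m → Ω → A) (f : Fin n → ℝ) (i : Fin n)
    (hmeas : ∀ i' j, Measurable (s i' j))
    (hcorrect : ∀ i' j, (μ {ω | s i' j ω = z j}).toReal = 1 - f i')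
    (hwrong : ∀ i' j, ∀ x : A, x ≠ z j →
      (μ {ω | s i' j ω = x}).toReal = f i' / ((k : ℝ) - 1))
    (hindep : ∀ i', i' ≠ i → ∀ j, IndepFun (s i j) (s i' j) μ) :
    ∫ ω, (((n : ℝ) - 1)⁻¹ * ∑ i' ∈ univ.erase i,
        (m : ℝ)⁻¹ * ∑ j, (if s i j ω ≠ s i' j ω then (1 : ℝ) else 0)) ∂μ
      = f i + (1 - (1 + 1 / ((k : ℝ) - 1)) * f i)
          * (((n : ℝ) - 1)⁻¹ * ∑ i' ∈ univ.erase i, f i') := by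
  have hn1 : ((n:ℝ) - 1) ≠ 0 := by
    have : (2:ℝ) ≤ (n:ℝ) := by exact_mod_cast hn
    linarith
  have hm0 : (m:ℝ) ≠ 0 := by positivity
  -- indicator rewriting and integrability
  have hind_eq : ∀ (i' : Fin n) (j : Fin m),
      (fun ω => if s i j ω ≠ s i' j ω then (1:ℝ) else 0)
        = Set.indicator {ω | s i j ω ≠ s i' j ω} (fun _ => (1:ℝ)) := by
    intro i' j; ext ω
    by_cases h : s i j ω = s i' j ω <;> simp [Set.indicator, h]
  have hSmeas : ∀ (i' : Fin n) (j : Fin m), MeasurableSet {ω | s i j ω ≠ s i' j ω} := by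
    intro i' j
    have : {ω | s i j ω = s i' j ω} = ⋃ x : A,
        (s i j) ⁻¹' {x} ∩ (s i' j) ⁻¹' {x} := by
      ext ω
      simp only [Set.mem_setOf_eq, Set.mem_iUnion, Set.mem_inter_iff, Set.mem_preimage,
        Set.mem_singleton_iff]
      exact ⟨fun h => ⟨s i' j ω, h, rfl⟩, fun ⟨x, h1, h2⟩ => h1.trans h2.symm⟩
    have hmeq : MeasurableSet {ω | s i j ω = s i' j ω} := by
      rw [this]
      exact MeasurableSet.iUnion fun x =>
        ((hmeas i j) (measurableSet_singleton x)).inter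
          ((hmeas i' j) (measurableSet_singleton x))
    exact hmeq.compl
  have hInt : ∀ (i' : Fin n) (j : Fin m),
      Integrable (fun ω => if s i j ω ≠ s i' j ω then (1:ℝ) else 0) μ := by
    intro i' j
    rw [hind_eq i' j]
    exact (integrable_const (1:ℝ)).indicator (hSmeas i' j)
  have hIntegral : ∀ (i' : Fin n) (j : Fin m),
      ∫ ω, (if s i j ω ≠ s i' j ω then (1:ℝ) else 0) ∂μ
        = (μ {ω | s i j ω ≠ s i' j ω}).toReal := by
    intro i' j
    rw [hind_eq i' j, integral_indicator_const _ (hSmeas i' j)]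
    simp [Measure.real]
  have hkey : ∀ i' ∈ univ.erase i, ∀ j : Fin m,
      (μ {ω | s i j ω ≠ s i' j ω}).toReal
        = f i + (1 - (1 + 1/((k:ℝ)-1)) * f i) * f i' := by
    intro i' hi' j
    exact pair_prob μ k hk hcard (s i j) (s i' j) (hmeas i j) (hmeas i' j) (z j)
      (f i) (f i') (hcorrect i j) (hcorrect i' j)
      (fun x hx => hwrong i j x hx) (fun x hx => hwrong i' j x hx)
      (hindep i' (Finset.ne_of_mem_erase hi') j)
  -- move integral inside
  rw [integral_const_mul]
  have hIntSum : ∀ i' ∈ univ.erase i,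
      Integrable (fun ω => (m : ℝ)⁻¹ * ∑ j, (if s i j ω ≠ s i' j ω then (1:ℝ) else 0)) μ := by
    intro i' _
    exact (integrable_finset_sum _ (fun j _ => hInt i' j)).const_mul _
  rw [integral_finset_sum _ hIntSum]
  have hterm : ∀ i' ∈ univ.erase i,
      ∫ ω, (m : ℝ)⁻¹ * ∑ j, (if s i j ω ≠ s i' j ω then (1:ℝ) else 0) ∂μ
        = f i + (1 - (1 + 1/((k:ℝ)-1)) * f i) * f i' := by
    intro i' hi'
    rw [integral_const_mul, integral_finset_sum _ (fun j _ => hInt i' j)]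
    rw [Finset.sum_congr rfl (fun j _ => (hIntegral i' j).trans (hkey i' hi' j))]
    rw [Finset.sum_const, Finset.card_univ, Fintype.card_fin, nsmul_eq_mul]
    field_simp
  rw [Finset.sum_congr rfl hterm]
  rw [Finset.sum_add_distrib, Finset.sum_const,
    Finset.card_erase_of_mem (Finset.mem_univ i), Finset.card_univ, Fintype.card_fin,
    ← Finset.mul_sum, nsmul_eq_mul]
  have hcast : ((n - 1 : ℕ) : ℝ) = (n:ℝ) - 1 := by
    have : 1 ≤ n := le_trans (by norm_num) hn
    push_cast [this]; ring
  rw [hcast]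
  field_simp
end

section
/- (Anna Karenina principle, IER model) In the independent-error model with k answers per question and θ = 1/(k−1), suppose worker i has fixed fault level f_i and the other n−1 workers have fault levels drawn i.i.d. from a distribution F with mean μ. Then E[π_i | f_i] = μ + (1 − (1+θ)μ) f_i, where π_i is the average normalized Hamming distance from worker i's answer vector to the other workers' answer vectors. -/
open MeasureTheory ProbabilityTheory Finset

/-- Anna Karenina principle for the IER model: worker `i` has a fixed fault level `fi`,
while the other workers' fault levels are i.i.d. draws from a proto-population with mean
`μF` (so that unconditionally each answers each question correctly with probability
`1 - μF` and gives each wrong answer with probability `μF/(k-1)`, independently of worker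
`i`).  Then the expected proxy distance of worker `i` equals
`μF + (1 - (1+θ) μF) · fi`, where `θ = 1/(k-1)`. -/
theorem stmt4 {Ω : Type*} [MeasurableSpace Ω] (μ : Measure Ω) [IsProbabilityMeasure μ]
    {A : Type*} [Fintype A] [DecidableEq A] [MeasurableSpace A] [MeasurableSingletonClass A]
    (k : ℕ) (hk : 2 ≤ k) (hcard : Fintype.card A = k)
    (n m : ℕ) (hn : 2 ≤ n) (hm : 1 ≤ m)
    (z : Fin m → A) (s : Fin n → Fin m → Ω → A) (i : Fin n) (fi μF : ℝ)
    (hmeas : ∀ i' j, Measurable (s i' j))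
    (hcorrect_i : ∀ j, (μ {ω | s i j ω = z j}).toReal = 1 - fi)
    (hwrong_i : ∀ j, ∀ x : A, x ≠ z j →
      (μ {ω | s i j ω = x}).toReal = fi / ((k : ℝ) - 1))
    (hcorrect : ∀ i', i' ≠ i → ∀ j, (μ {ω | s i' j ω = z j}).toReal = 1 - μF)
    (hwrong : ∀ i', i' ≠ i → ∀ j, ∀ x : A, x ≠ z j →
      (μ {ω | s i' j ω = x}).toReal = μF / ((k : ℝ) - 1))
    (hindep : ∀ i', i' ≠ i → ∀ j, IndepFun (s i j) (s i' j) μ) :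
    ∫ ω, (((n : ℝ) - 1)⁻¹ * ∑ i' ∈ univ.erase i,
        (m : ℝ)⁻¹ * ∑ j, (if s i j ω ≠ s i' j ω then (1 : ℝ) else 0)) ∂μ
      = μF + (1 - (1 + 1 / ((k : ℝ) - 1)) * μF) * fi := by
  classical
  have hk1 : (1:ℝ) ≤ (k:ℝ) - 1 := by
    have : (2:ℝ) ≤ (k:ℝ) := by exact_mod_cast hk
    linarith
  have hkne : ((k:ℝ) - 1) ≠ 0 := by linarith
  set c : ℝ := μF + (1 - (1 + 1 / ((k : ℝ) - 1)) * μF) * fi with hc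
  -- key pointwise expectation
  have key : ∀ i' ∈ univ.erase i, ∀ j : Fin m,
      ∫ ω, (if s i j ω ≠ s i' j ω then (1 : ℝ) else 0) ∂μ = c := by
    intro i' hi' j
    have hi'ne : i' ≠ i := (mem_erase.mp hi').1
    have hE : MeasurableSet {ω | s i j ω = s i' j ω} :=
      measurableSet_eq_fun (hmeas i j) (hmeas i' j)
    have hS : MeasurableSet {ω | s i j ω ≠ s i' j ω} := hE.compl
    have hint : ∫ ω, (if s i j ω ≠ s i' j ω then (1 : ℝ) else 0) ∂μ
        = (μ {ω | s i j ω ≠ s i' j ω}).toReal := by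
      rw [← measureReal_def, ← integral_indicator_one hS]
      congr 1
      ext ω
      by_cases h : s i j ω ≠ s i' j ω <;>
        simp [Set.indicator_apply, h, Set.mem_setOf_eq]
    rw [hint]
    have hcompl : (μ {ω | s i j ω ≠ s i' j ω}).toReal
        = 1 - (μ {ω | s i j ω = s i' j ω}).toReal := by
      have : {ω | s i j ω ≠ s i' j ω} = {ω | s i j ω = s i' j ω}ᶜ := rfl
      rw [this, measure_compl hE (measure_ne_top _ _), measure_univ]
      rw [ENNReal.toReal_sub_of_le (prob_le_one) (by simp)]
      simp
    rw [hcompl]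
    -- compute μ of the equality event
    have hdecomp : {ω | s i j ω = s i' j ω}
        = ⋃ x : A, (s i j ⁻¹' {x} ∩ s i' j ⁻¹' {x}) := by
      ext ω
      simp only [Set.mem_setOf_eq, Set.mem_iUnion, Set.mem_inter_iff, Set.mem_preimage,
        Set.mem_singleton_iff]
      constructor
      · intro h; exact ⟨s i' j ω, h, rfl⟩
      · rintro ⟨x, h1, h2⟩; rw [h1, h2]
    have hmeasure : μ {ω | s i j ω = s i' j ω}
        = ∑ x : A, μ (s i j ⁻¹' {x}) * μ (s i' j ⁻¹' {x}) := by
      rw [hdecomp, measure_iUnion, tsum_fintype]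
      · exact Finset.sum_congr rfl fun x _ =>
          (hindep i' hi'ne j).measure_inter_preimage_eq_mul _ _
            (measurableSet_singleton x) (measurableSet_singleton x)
      · intro x y hxy
        refine Set.disjoint_left.mpr ?_
        rintro ω ⟨h1, _⟩ ⟨h2, _⟩
        exact hxy (by simp only [Set.mem_preimage, Set.mem_singleton_iff] at h1 h2; rw [← h1, ← h2])
      · exact fun x => ((hmeas i j (measurableSet_singleton x)).inter
          (hmeas i' j (measurableSet_singleton x)))
    have hpre : ∀ x : A, (s i j ⁻¹' {x}) = {ω | s i j ω = x} := fun x => rfl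
    have hpre' : ∀ x : A, (s i' j ⁻¹' {x}) = {ω | s i' j ω = x} := fun x => rfl
    have htoReal : (μ {ω | s i j ω = s i' j ω}).toReal
        = ∑ x : A, (μ {ω | s i j ω = x}).toReal * (μ {ω | s i' j ω = x}).toReal := by
      rw [hmeasure, ENNReal.toReal_sum]
      · exact Finset.sum_congr rfl fun x _ => by rw [ENNReal.toReal_mul, hpre, hpre']
      · intro x _
        exact ENNReal.mul_ne_top (measure_ne_top _ _) (measure_ne_top _ _)
    rw [htoReal]
    have hsplit : ∑ x : A, (μ {ω | s i j ω = x}).toReal * (μ {ω | s i' j ω = x}).toReal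
        = (1 - fi) * (1 - μF)
          + ((k:ℝ) - 1) * ((fi / ((k:ℝ) - 1)) * (μF / ((k:ℝ) - 1))) := by
      rw [← Finset.add_sum_erase _ _ (mem_univ (z j)), hcorrect_i j, hcorrect i' hi'ne j]
      congr 1
      rw [Finset.sum_congr rfl (fun x hx => by
        rw [hwrong_i j x (mem_erase.mp hx).1, hwrong i' hi'ne j x (mem_erase.mp hx).1])]
      rw [Finset.sum_const, nsmul_eq_mul]
      congr 1
      rw [card_erase_of_mem (mem_univ _), card_univ, hcard]
      have : 1 ≤ k := le_trans one_le_two hk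
      push_cast [Nat.cast_sub this]
      ring
    rw [hsplit, hc]
    field_simp
    ring
  -- integrability of indicators
  have hintg : ∀ i' j, Integrable (fun ω => if s i j ω ≠ s i' j ω then (1 : ℝ) else 0) μ := by
    intro i' j
    have hE : MeasurableSet {ω | s i j ω = s i' j ω} :=
      measurableSet_eq_fun (hmeas i j) (hmeas i' j)
    have : (fun ω => if s i j ω ≠ s i' j ω then (1 : ℝ) else 0)
        = Set.indicator {ω | s i j ω ≠ s i' j ω} (fun _ => (1:ℝ)) := by
      ext ω
      by_cases h : s i j ω ≠ s i' j ω <;> simp [Set.indicator_apply, h, Set.mem_setOf_eq]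
    rw [this]
    exact (integrable_const (1:ℝ)).indicator hE.compl
  rw [integral_const_mul, integral_finset_sum _ (fun i' _ =>
    ((integrable_finset_sum _ (fun j _ => hintg i' j)).const_mul _))]
  have : ∀ i' ∈ univ.erase i,
      (∫ ω, (m : ℝ)⁻¹ * ∑ j, (if s i j ω ≠ s i' j ω then (1 : ℝ) else 0) ∂μ) = c := by
    intro i' hi'
    rw [integral_const_mul, integral_finset_sum _ (fun j _ => hintg i' j),
      Finset.sum_congr rfl (fun j _ => key i' hi' j), Finset.sum_const, card_univ,
      Fintype.card_fin, nsmul_eq_mul]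
    have hmne : (m:ℝ) ≠ 0 := by positivity
    field_simp
  rw [Finset.sum_congr rfl this, Finset.sum_const, card_erase_of_mem (mem_univ _),
    card_univ, Fintype.card_fin, nsmul_eq_mul]
  have hn1 : ((n - 1 : ℕ) : ℝ) = (n:ℝ) - 1 := by
    have : 1 ≤ n := le_trans one_le_two hn
    push_cast [Nat.cast_sub this]; ring
  have hnne : ((n:ℝ) - 1) ≠ 0 := by
    have : (2:ℝ) ≤ (n:ℝ) := by exact_mod_cast hn
    linarith
  rw [hn1]
  field_simp
end

section
/- (Equivalence of P-EFL and D-EFL in the continuous domain) Let S = (s_1,…,s_n), s_i ∈ ℝ^m, and let d_E(s,s') = (1/m) Σ_j (s_j − s'_j)^2. Define the empirical mean y = (1/n) Σ_i s_i, the distance-based estimate f̂⁰_i = d_E(s_i, y), the proxy distance π_i = (1/(n−1)) Σ_{i'≠i} d_E(s_i, s_{i'}), and the proxy estimate f̂_i = π_i − μ̂ with μ̂ = (1/(n−1)) Σ_{i'} f̂⁰_{i'}. Then for every i, f̂_i = (n/(n−1)) · f̂⁰_i. -/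
open Finset

lemma key_sum (n : ℕ) (a y : ℝ) (b : Fin n → ℝ) (h : ∑ i, b i = n * y) :
    ∑ i', (a - b i') ^ 2 = n * (a - y) ^ 2 + ∑ i', (b i' - y) ^ 2 := by
  have h1 : ∀ i' : Fin n, (a - b i') ^ 2
      = ((a - y) ^ 2 + (b i' - y) ^ 2) + (2 * (a - y) * y - 2 * (a - y) * b i') := by
    intro i'; ring
  rw [Finset.sum_congr rfl (fun i' _ => h1 i')]
  simp only [Finset.sum_add_distrib, Finset.sum_sub_distrib, Finset.sum_const,
    Finset.card_univ, Fintype.card_fin, ← Finset.mul_sum, h, smul_eq_mul]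
  ring

/-- Equivalence of P-EFL and D-EFL in the continuous domain: the proxy-based estimate
with `u = 1/(n-1)` equals `n/(n-1)` times the distance-from-the-mean estimate. -/
theorem stmt6 (n m : ℕ) (hn : 2 ≤ n) (hm : 1 ≤ m)
    (s : Fin n → Fin m → ℝ) (i : Fin n) :
    letI dE : (Fin m → ℝ) → (Fin m → ℝ) → ℝ :=
      fun a b => (m : ℝ)⁻¹ * ∑ j, (a j - b j) ^ 2
    letI y : Fin m → ℝ := fun j => (n : ℝ)⁻¹ * ∑ i', s i' j
    letI f0 : Fin n → ℝ := fun i' => dE (s i') y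
    letI π : ℝ := ((n : ℝ) - 1)⁻¹ * ∑ i' ∈ univ.erase i, dE (s i) (s i')
    letI μhat : ℝ := ((n : ℝ) - 1)⁻¹ * ∑ i', f0 i'
    π - μhat = ((n : ℝ) / ((n : ℝ) - 1)) * f0 i := by
  have hn0 : (n : ℝ) ≠ 0 := by positivity
  have hn1 : (n : ℝ) - 1 ≠ 0 := by
    have : (2 : ℝ) ≤ n := by exact_mod_cast hn
    linarith
  have hm0 : (m : ℝ) ≠ 0 := by
    have : (1 : ℝ) ≤ m := by exact_mod_cast hm
    linarith
  set Y : Fin m → ℝ := fun j => (n : ℝ)⁻¹ * ∑ i', s i' j with hY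
  have herase : ∑ i' ∈ univ.erase i, ((m : ℝ)⁻¹ * ∑ j, (s i j - s i' j) ^ 2)
      = ∑ i', ((m : ℝ)⁻¹ * ∑ j, (s i j - s i' j) ^ 2) :=
    Finset.sum_erase _ (by simp)
  have hj : ∀ j, ∑ i', (s i j - s i' j) ^ 2
      = n * (s i j - Y j) ^ 2 + ∑ i', (s i' j - Y j) ^ 2 := by
    intro j
    exact key_sum n (s i j) (Y j) (fun i' => s i' j) (by simp only [hY, mul_inv_cancel_left₀ hn0])
  have hswap : ∑ i', ∑ j, (s i j - s i' j) ^ 2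
      = n * ∑ j, (s i j - Y j) ^ 2 + ∑ i', ∑ j, (s i' j - Y j) ^ 2 := by
    rw [Finset.sum_comm, Finset.sum_congr rfl (fun j _ => hj j),
      Finset.sum_add_distrib, ← Finset.mul_sum]
    congr 1
    exact Finset.sum_comm
  show ((n : ℝ) - 1)⁻¹ * ∑ i' ∈ univ.erase i, ((m : ℝ)⁻¹ * ∑ j, (s i j - s i' j) ^ 2)
      - ((n : ℝ) - 1)⁻¹ * ∑ i', ((m : ℝ)⁻¹ * ∑ j, (s i' j - Y j) ^ 2)
      = ((n : ℝ) / ((n : ℝ) - 1)) * ((m : ℝ)⁻¹ * ∑ j, (s i j - Y j) ^ 2)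
  rw [herase, ← Finset.mul_sum, ← Finset.mul_sum, hswap]
  field_simp
  ring
end

section
/- (Robustness of weighted mean aggregation) Let s_{ij} ∈ ℝ for i = 1,…,n, j = 1,…,m, with s̄ = max_{i,j} |s_{ij}|. Let z ∈ ℝ^m, let w*_i > 0 with Σ_i w*_i = 1, set x*_j = Σ_i w*_i s_{ij}. Suppose weights ŵ_i satisfy ŵ_i ∈ [(1−δ)w*_i, (1+2δ)w*_i] for all i, with δ ≤ 1/4, and set ẑ_j = (Σ_i ŵ_i s_{ij}) / (Σ_i ŵ_i). Then (1/m) Σ_j (ẑ_j − z_j)^2 ≤ (1/m) Σ_j (x*_j − z_j)^2 + 50 δ s̄^2. -/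
open Finset

/-- Robustness of weighted mean aggregation: if the weights `what` are multiplicative
`δ`-perturbations of the optimal weights `w` (with `δ ≤ 1/4`), then the error of the
perturbed weighted mean exceeds the optimal error by at most `50 δ s̄²`. -/
theorem stmt8 (n m : ℕ) (hn : 1 ≤ n) (hm : 1 ≤ m)
    (s : Fin n → Fin m → ℝ) (z : Fin m → ℝ) (w what : Fin n → ℝ) (δ sbar : ℝ)
    (hsbar : ∀ i j, |s i j| ≤ sbar) (hzbar : ∀ j, |z j| ≤ sbar)
    (hw : ∀ i, 0 < w i) (hsum : ∑ i, w i = 1)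
    (hδ0 : 0 ≤ δ) (hδ4 : δ ≤ 1 / 4)
    (hwhat : ∀ i, (1 - δ) * w i ≤ what i ∧ what i ≤ (1 + 2 * δ) * w i) :
    letI x : Fin m → ℝ := fun j => ∑ i, w i * s i j
    letI zhat : Fin m → ℝ := fun j => (∑ i, what i * s i j) / (∑ i, what i)
    (m : ℝ)⁻¹ * ∑ j, (zhat j - z j) ^ 2
      ≤ (m : ℝ)⁻¹ * ∑ j, (x j - z j) ^ 2 + 50 * δ * sbar ^ 2 := by
  beta_reduce
  set x : Fin m → ℝ := fun j => ∑ i, w i * s i j with hxdef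
  set zhat : Fin m → ℝ := fun j => (∑ i, what i * s i j) / (∑ i, what i) with hzdef
  have hm0 : (0:ℝ) < m := by exact_mod_cast hm
  have hsbar0 : 0 ≤ sbar := le_trans (abs_nonneg _) (hsbar ⟨0, hn⟩ ⟨0, hm⟩)
  have hWlo : 1 - δ ≤ ∑ i, what i := by
    calc 1 - δ = ∑ i, (1 - δ) * w i := by rw [← Finset.mul_sum, hsum, mul_one]
    _ ≤ ∑ i, what i := Finset.sum_le_sum fun i _ => (hwhat i).1
  have hWhi : (∑ i, what i) ≤ 1 + 2 * δ := by
    calc (∑ i, what i) ≤ ∑ i, (1 + 2 * δ) * w i :=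
          Finset.sum_le_sum fun i _ => (hwhat i).2
    _ = 1 + 2 * δ := by rw [← Finset.mul_sum, hsum, mul_one]
  have hWpos : (0:ℝ) < ∑ i, what i := by linarith
  have key : ∀ j, (zhat j - z j) ^ 2 ≤ (x j - z j) ^ 2 + 20 * δ * sbar ^ 2 := by
    intro j
    have hx : |x j| ≤ sbar := by
      calc |x j| ≤ ∑ i, |w i * s i j| := Finset.abs_sum_le_sum_abs _ _
      _ ≤ ∑ i, w i * sbar := Finset.sum_le_sum fun i _ => by
          rw [abs_mul, abs_of_pos (hw i)]
          exact mul_le_mul_of_nonneg_left (hsbar i j) (hw i).le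
      _ = sbar := by rw [← Finset.sum_mul, hsum, one_mul]
    set W := ∑ i, what i with hWdef
    have heq : zhat j - x j = (∑ i, (what i - W * w i) * s i j) / W := by
      have hnum : ∑ i, (what i - W * w i) * s i j
          = (∑ i, what i * s i j) - W * x j := by
        simp [sub_mul, Finset.sum_sub_distrib, Finset.mul_sum, mul_assoc, x]
      rw [hnum]
      field_simp [zhat]
      simp only [hzdef]; rw [sub_mul, div_mul_cancel₀ _ hWpos.ne']
    have hnumb : |∑ i, (what i - W * w i) * s i j| ≤ 3 * δ * sbar := by
      calc |∑ i, (what i - W * w i) * s i j|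
          ≤ ∑ i, |(what i - W * w i) * s i j| := Finset.abs_sum_le_sum_abs _ _
      _ ≤ ∑ i, (3 * δ * sbar) * w i := by
          refine Finset.sum_le_sum fun i _ => ?_
          rw [abs_mul]
          have h1 : W * w i ≤ (1 + 2 * δ) * w i :=
            mul_le_mul_of_nonneg_right hWhi (hw i).le
          have h2 : (1 - δ) * w i ≤ W * w i :=
            mul_le_mul_of_nonneg_right hWlo (hw i).le
          have habs : |what i - W * w i| ≤ 3 * δ * w i := by
            rw [abs_le]
            constructor <;> nlinarith [(hwhat i).1, (hwhat i).2]
          calc |what i - W * w i| * |s i j| ≤ (3 * δ * w i) * sbar :=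
                mul_le_mul habs (hsbar i j) (abs_nonneg _) (mul_nonneg (by linarith) (hw i).le)
          _ = (3 * δ * sbar) * w i := by ring
      _ = 3 * δ * sbar := by rw [← Finset.mul_sum, hsum, mul_one]
    have hdiff : |zhat j - x j| ≤ 4 * δ * sbar := by
      rw [heq, abs_div, abs_of_pos hWpos, div_le_iff₀ hWpos]
      nlinarith [mul_nonneg (mul_nonneg hδ0 hsbar0) (by linarith : (0:ℝ) ≤ 4 * W - 3)]
    have hd := abs_le.mp hdiff
    have hx' := abs_le.mp hx
    have hz' := abs_le.mp (hzbar j)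
    have hC : 0 ≤ (4 * δ * sbar - (zhat j - x j)) * (2 * sbar + (x j - z j)) :=
      mul_nonneg (by linarith) (by linarith)
    have hD : 0 ≤ (4 * δ * sbar + (zhat j - x j)) * (2 * sbar - (x j - z j)) :=
      mul_nonneg (by linarith) (by linarith)
    have hP : 0 ≤ (4 * δ * sbar - (zhat j - x j)) * (4 * δ * sbar + (zhat j - x j)) :=
      mul_nonneg (by linarith) (by linarith)
    have hQ : 0 ≤ δ * sbar ^ 2 * (1 - 4 * δ) := mul_nonneg (by positivity) (by linarith)
    nlinarith [hC, hD, hP, hQ]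
  have hsum2 : ∑ j, (zhat j - z j) ^ 2
      ≤ ∑ j, (x j - z j) ^ 2 + m * (20 * δ * sbar ^ 2) := by
    calc ∑ j, (zhat j - z j) ^ 2
        ≤ ∑ j, ((x j - z j) ^ 2 + 20 * δ * sbar ^ 2) :=
          Finset.sum_le_sum fun j _ => key j
    _ = ∑ j, (x j - z j) ^ 2 + m * (20 * δ * sbar ^ 2) := by
        rw [Finset.sum_add_distrib, Finset.sum_const, Finset.card_univ,
          Fintype.card_fin, nsmul_eq_mul]
  have h30 : 20 * δ * sbar ^ 2 ≤ 50 * δ * sbar ^ 2 := by nlinarith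
  have hstep : (m : ℝ)⁻¹ * ∑ j, (zhat j - z j) ^ 2
      ≤ (m : ℝ)⁻¹ * (∑ j, (x j - z j) ^ 2 + m * (20 * δ * sbar ^ 2)) :=
    mul_le_mul_of_nonneg_left hsum2 (by positivity)
  rw [mul_add, ← mul_assoc, inv_mul_cancel₀ hm0.ne', one_mul] at hstep
  linarith
end

section
/- (Grofman/MLE weighted plurality, binary case) Suppose z ∈ {0,1} has uniform prior, and n independent voters each report s_i with Pr[s_i = z] = 1 − f_i, where f_i ∈ (0,1). Then the maximum likelihood estimate of z given (s_1,…,s_n) is the weighted majority winner with weights w*_i = log((1 − f_i)/f_i); that is, the MLE is 1 iff Σ_{i: s_i = 1} w*_i > Σ_{i: s_i = 0} w*_i (with ties having equal likelihood). -/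
open Finset

/-- Grofman/MLE weighted plurality, binary case: with uniform prior on `z : Bool` and
independent voters reporting the truth with probability `1 - f i`, the likelihood of
`true` exceeds that of `false` iff the Grofman-weighted vote for `true` exceeds the
one for `false`, and ties in weighted votes correspond to ties in likelihood. -/
theorem stmt10 (n : ℕ) (f : Fin n → ℝ) (hf : ∀ i, 0 < f i ∧ f i < 1)
    (s : Fin n → Bool) :
    letI L : Bool → ℝ := fun z => ∏ i, if s i = z then 1 - f i else f i
    letI w : Fin n → ℝ := fun i => Real.log ((1 - f i) / f i)
    (L false < L true ↔
      ∑ i ∈ univ.filter (fun i => s i = false), w i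
        < ∑ i ∈ univ.filter (fun i => s i = true), w i) ∧
    (L false = L true ↔
      ∑ i ∈ univ.filter (fun i => s i = false), w i
        = ∑ i ∈ univ.filter (fun i => s i = true), w i) := by
  set L : Bool → ℝ := fun z => ∏ i, if s i = z then 1 - f i else f i with hL
  set w : Fin n → ℝ := fun i => Real.log ((1 - f i) / f i) with hw
  have hpos : ∀ z, 0 < L z := by
    intro z
    apply Finset.prod_pos
    intro i _
    rcases hf i with ⟨h0, h1⟩
    split <;> linarith
  have hne : ∀ z i, (i ∈ (univ : Finset (Fin n))) → (if s i = z then 1 - f i else f i) ≠ 0 := by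
    intro z i _
    rcases hf i with ⟨h0, h1⟩
    split <;> linarith
  have hlog : ∀ z, Real.log (L z) = ∑ i, Real.log (if s i = z then 1 - f i else f i) := by
    intro z
    exact Real.log_prod (hne z)
  have key : Real.log (L true) - Real.log (L false)
      = ∑ i ∈ univ.filter (fun i => s i = true), w i
        - ∑ i ∈ univ.filter (fun i => s i = false), w i := by
    rw [hlog, hlog, ← Finset.sum_sub_distrib]
    have hsplit : ∑ i, (Real.log (if s i = true then 1 - f i else f i)
        - Real.log (if s i = false then 1 - f i else f i))
        = ∑ i ∈ univ.filter (fun i => s i = true),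
            (Real.log (if s i = true then 1 - f i else f i)
              - Real.log (if s i = false then 1 - f i else f i))
          + ∑ i ∈ univ.filter (fun i => ¬ (s i = true)),
            (Real.log (if s i = true then 1 - f i else f i)
              - Real.log (if s i = false then 1 - f i else f i)) :=
      (Finset.sum_filter_add_sum_filter_not _ _ _).symm
    rw [hsplit]
    have h1 : ∑ i ∈ univ.filter (fun i => s i = true),
        (Real.log (if s i = true then 1 - f i else f i)
          - Real.log (if s i = false then 1 - f i else f i))
        = ∑ i ∈ univ.filter (fun i => s i = true), w i := by
      apply Finset.sum_congr rfl
      intro i hi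
      simp only [Finset.mem_filter] at hi
      rcases hf i with ⟨h0, h1⟩
      rw [show (if s i = true then 1 - f i else f i) = 1 - f i by rw [hi.2]; simp,
        show (if s i = false then 1 - f i else f i) = f i by rw [hi.2]; simp]
      show _ = Real.log ((1 - f i) / f i)
      rw [Real.log_div (by linarith) (by linarith)]
    have hfilt : univ.filter (fun i => ¬ (s i = true)) = univ.filter (fun i => s i = false) := by
      apply Finset.filter_congr
      intro i _
      simp [Bool.not_eq_true]
    have h2 : ∑ i ∈ univ.filter (fun i => ¬ (s i = true)),
        (Real.log (if s i = true then 1 - f i else f i)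
          - Real.log (if s i = false then 1 - f i else f i))
        = - ∑ i ∈ univ.filter (fun i => s i = false), w i := by
      rw [hfilt, ← Finset.sum_neg_distrib]
      apply Finset.sum_congr rfl
      intro i hi
      simp only [Finset.mem_filter] at hi
      rcases hf i with ⟨h0, h1⟩
      rw [show (if s i = true then 1 - f i else f i) = f i by rw [hi.2]; simp,
        show (if s i = false then 1 - f i else f i) = 1 - f i by rw [hi.2]; simp]
      show _ = -Real.log ((1 - f i) / f i)
      rw [Real.log_div (by linarith) (by linarith)]
      ring
    rw [h1, h2]
    ring
  constructor
  · rw [← Real.log_lt_log_iff (hpos false) (hpos true)]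
    constructor <;> intro h <;> linarith
  · constructor
    · intro h
      have : Real.log (L false) = Real.log (L true) := by rw [h]
      linarith
    · intro h
      have hl : Real.log (L false) = Real.log (L true) := by linarith
      have := Real.exp_log (hpos false)
      have := Real.exp_log (hpos true)
      rw [← Real.exp_log (hpos false), ← Real.exp_log (hpos true), hl]
end

section
/- (Grofman weights, k-ary case) Suppose z ∈ A with |A| = k ≥ 2 has uniform prior, and n independent voters report s_i with Pr[s_i = z] = 1 − f_i and Pr[s_i = x] = f_i/(k−1) for each x ≠ z, where f_i ∈ (0,1). Then arg max over x ∈ A of the posterior probability of z = x equals arg max over x ∈ A of Σ_{i : s_i = x} w*_i, where w*_i = log((1 − f_i)(k−1)/f_i). -/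
open Finset

/-- Grofman weights, k-ary case: with a uniform prior over the `k` answers and
independent voters who answer correctly with probability `1 - f i` and otherwise
uniformly among wrong answers, the set of posterior-likelihood maximizers coincides
with the set of maximizers of the Grofman-weighted plurality score. -/
theorem stmt11 {A : Type*} [Fintype A] [DecidableEq A]
    (k : ℕ) (hk : 2 ≤ k) (hcard : Fintype.card A = k)
    (n : ℕ) (f : Fin n → ℝ) (hf : ∀ i, 0 < f i ∧ f i < 1) (s : Fin n → A) :
    letI L : A → ℝ := fun x => ∏ i, if s i = x then 1 - f i else f i / ((k : ℝ) - 1)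
    letI w : Fin n → ℝ := fun i => Real.log ((1 - f i) * ((k : ℝ) - 1) / f i)
    letI score : A → ℝ := fun x => ∑ i ∈ univ.filter (fun i => s i = x), w i
    {x : A | ∀ y : A, L y ≤ L x} = {x : A | ∀ y : A, score y ≤ score x} := by
  beta_reduce
  set L : A → ℝ := fun x => ∏ i, if s i = x then 1 - f i else f i / ((k : ℝ) - 1) with hL
  set w : Fin n → ℝ := fun i => Real.log ((1 - f i) * ((k : ℝ) - 1) / f i) with hw
  set score : A → ℝ := fun x => ∑ i ∈ univ.filter (fun i => s i = x), w i with hscore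
  have hk1 : (1:ℝ) ≤ (k : ℝ) - 1 := by
    have : (2:ℝ) ≤ (k:ℝ) := by exact_mod_cast hk
    linarith
  have hkpos : (0:ℝ) < (k:ℝ) - 1 := by linarith
  have hLpos : ∀ x, 0 < L x := by
    intro x
    apply Finset.prod_pos
    intro i _
    by_cases h : s i = x
    · simp [h]; linarith [(hf i).2]
    · simp [h]; exact div_pos (hf i).1 hkpos
  have hlog : ∀ x, Real.log (L x)
      = (∑ i, Real.log (f i / ((k:ℝ) - 1))) + score x := by
    intro x
    have h1 : Real.log (L x) = ∑ i, Real.log (if s i = x then 1 - f i else f i / ((k:ℝ)-1)) := by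
      apply Real.log_prod
      intro i _
      by_cases h : s i = x
      · simp [h]; linarith [(hf i).2]
      · simp only [h, if_false]
        exact div_ne_zero (ne_of_gt (hf i).1) (ne_of_gt hkpos)
    have h2 : score x = ∑ i, if s i = x then w i else 0 := by
      simp [score, Finset.sum_filter]
    rw [h1, h2, ← Finset.sum_add_distrib]
    apply Finset.sum_congr rfl
    intro i _
    have hfi := hf i
    have hne : f i ≠ 0 := ne_of_gt hfi.1
    have hne1 : (1:ℝ) - f i ≠ 0 := by linarith [hfi.2]
    have hnek : ((k:ℝ) - 1) ≠ 0 := ne_of_gt hkpos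
    by_cases h : s i = x
    · simp only [h, if_true, w]
      rw [Real.log_div hne hnek, Real.log_div (mul_ne_zero hne1 hnek) hne,
        Real.log_mul hne1 hnek]
      ring
    · simp [h]
  ext x
  simp only [Set.mem_setOf_eq]
  constructor
  · intro H y
    have := (Real.log_le_log_iff (hLpos y) (hLpos x)).2 (H y)
    rw [hlog, hlog] at this
    linarith
  · intro H y
    have : Real.log (L y) ≤ Real.log (L x) := by
      rw [hlog, hlog]; linarith [H y]
    exact (Real.log_le_log_iff (hLpos y) (hLpos x)).1 this
end
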